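/- arXiv:2206.14174 — 4 statements merged into one kernel-verified Lean document; each statement's English description precedes it below -/
import Mathlib

section
/- The function x ↦ |x|^t · |1 - x| on the interval [-1/2, 1] is bounded above by 0.0770561, where t = 4.28291. -/
lemma num_endpoint : ((1:ℝ)/2) ^ ((4.28291:ℝ)) * (3/2) ≤ 0.0770561 := by
  have h1 : ((1:ℝ)/2) ^ ((4.28291:ℝ)) ≤ ((1:ℝ)/2) ^ ((3709:ℝ)/866) :=
    Real.rpow_le_rpow_of_exponent_ge (by norm_num) (by norm_num) (by norm_num)
  have h2 : ((1:ℝ)/2) ^ ((3709:ℝ)/866) ≤ 1541122/(3*10^7) := by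
    have hpow : (((1:ℝ)/2) ^ ((3709:ℝ)/866)) ^ (866:ℕ) ≤ ((1541122:ℝ)/(3*10^7)) ^ (866:ℕ) := by
      rw [← Real.rpow_natCast (((1:ℝ)/2) ^ ((3709:ℝ)/866)) 866, ← Real.rpow_mul (by norm_num)]
      have : ((3709:ℝ)/866) * (866:ℕ) = ((3709:ℕ):ℝ) := by push_cast; ring
      rw [this, Real.rpow_natCast]
      rw [div_pow, div_pow, div_le_div_iff₀ (by positivity) (by positivity)]
      exact_mod_cast (by decide +kernel : (1:ℕ)^3709 * (3*10^7)^866 ≤ 1541122^866 * 2^3709)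
    exact le_of_pow_le_pow_left₀ (by norm_num) (by positivity) hpow
  calc ((1:ℝ)/2) ^ ((4.28291:ℝ)) * (3/2) ≤ (1541122/(3*10^7)) * (3/2) := by
        refine mul_le_mul_of_nonneg_right (h1.trans h2) (by norm_num)
    _ = 0.0770561 := by norm_num

lemma num_interior : ((4.28291:ℝ)/5.28291) ^ ((5.28291:ℝ)) ≤ 0.0770561 * 4.28291 := by
  have h1 : ((4.28291:ℝ)/5.28291) ^ ((5.28291:ℝ)) ≤ ((4.28291:ℝ)/5.28291) ^ ((4575:ℝ)/866) :=
    Real.rpow_le_rpow_of_exponent_ge (by norm_num) (by norm_num) (by norm_num)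
  refine h1.trans ?_
  have hpow : (((4.28291:ℝ)/5.28291) ^ ((4575:ℝ)/866)) ^ (866:ℕ)
      ≤ ((0.0770561:ℝ) * 4.28291) ^ (866:ℕ) := by
    rw [← Real.rpow_natCast (((4.28291:ℝ)/5.28291) ^ ((4575:ℝ)/866)) 866,
      ← Real.rpow_mul (by norm_num)]
    have : ((4575:ℝ)/866) * (866:ℕ) = ((4575:ℕ):ℝ) := by push_cast; ring
    rw [this, Real.rpow_natCast]
    have e1 : ((4.28291:ℝ)/5.28291) = 428291/528291 := by norm_num
    have e2 : ((0.0770561:ℝ) * 4.28291) = 330024341251/10^12 := by norm_num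
    rw [e1, e2, div_pow, div_pow, div_le_div_iff₀ (by positivity) (by positivity)]
    exact_mod_cast (by decide +kernel : (428291:ℕ)^4575 * (10^12)^866 ≤ 330024341251^866 * 528291^4575)
  exact le_of_pow_le_pow_left₀ (by norm_num) (by positivity) hpow

theorem stmt_2 (x : ℝ) (hx : x ∈ Set.Icc (-(1/2) : ℝ) 1) :
    |x| ^ (4.28291 : ℝ) * |1 - x| ≤ 0.0770561 := by
  obtain ⟨hlo, hhi⟩ := hx
  set t : ℝ := (4.28291 : ℝ) with ht
  have ht0 : (0:ℝ) < t := by norm_num [ht]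
  rcases le_or_gt x 0 with hx0 | hx0
  · -- x ∈ [-1/2, 0]
    have habs : |x| ≤ 1/2 := by
      rw [abs_le]; constructor <;> linarith
    have h1x : |1 - x| ≤ 3/2 := by
      rw [abs_le]; constructor <;> linarith
    have h1 : |x| ^ t ≤ ((1:ℝ)/2) ^ t :=
      Real.rpow_le_rpow (abs_nonneg x) habs ht0.le
    calc |x| ^ t * |1 - x| ≤ ((1:ℝ)/2) ^ t * (3/2) := by
          exact mul_le_mul h1 h1x (abs_nonneg _) (by positivity)
      _ ≤ 0.0770561 := num_endpoint
  · -- x ∈ (0, 1]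
    have hx1 : x ≤ 1 := hhi
    have habs : |x| = x := abs_of_pos hx0
    have habs1 : |1 - x| = 1 - x := abs_of_nonneg (by linarith)
    rw [habs, habs1]
    have hw1 : (0:ℝ) ≤ t/(t+1) := by positivity
    have hw2 : (0:ℝ) ≤ 1/(t+1) := by positivity
    have hsum : t/(t+1) + 1/(t+1) = 1 := by field_simp
    have hp2 : (0:ℝ) ≤ t * (1 - x) := by nlinarith
    have hgm := Real.geom_mean_le_arith_mean2_weighted hw1 hw2 hx0.le hp2 hsum
    -- hgm : x ^ (t/(t+1)) * (t*(1-x)) ^ (1/(t+1)) ≤ t/(t+1) * x + 1/(t+1) * (t*(1-x))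
    have hrhs : t/(t+1) * x + 1/(t+1) * (t*(1-x)) = t/(t+1) := by field_simp; ring
    rw [hrhs] at hgm
    have hL0 : (0:ℝ) ≤ x ^ (t/(t+1)) * (t*(1-x)) ^ (1/(t+1)) := by positivity
    have hpow := Real.rpow_le_rpow hL0 hgm (le_of_lt (by positivity : (0:ℝ) < t + 1))
    rw [Real.mul_rpow (by positivity) (by positivity), ← Real.rpow_mul hx0.le,
      ← Real.rpow_mul hp2] at hpow
    have e1 : t/(t+1) * (t+1) = t := by field_simp
    have e2 : 1/(t+1) * (t+1) = 1 := by field_simp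
    rw [e1, e2, Real.rpow_one] at hpow
    -- hpow : x ^ t * (t * (1 - x)) ≤ (t/(t+1)) ^ (t+1)
    have hkey : (t/(t+1)) ^ ((t+1):ℝ) ≤ 0.0770561 * t := by
      have : (t:ℝ) + 1 = (5.28291:ℝ) := by norm_num [ht]
      rw [ht, this]
      exact num_interior
    have : x ^ t * (t * (1 - x)) ≤ 0.0770561 * t := hpow.trans hkey
    have h' : t * (x ^ t * (1 - x)) ≤ t * 0.0770561 := by
      rw [show t * (x ^ t * (1 - x)) = x ^ t * (t * (1 - x)) by ring, mul_comm t (0.0770561:ℝ)]; exact this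
    exact le_of_mul_le_mul_left h' ht0
end

section
/- Suppose a monic integer polynomial q of degree n ≥ 2 is irreducible over ℚ, has exactly one pair of complex conjugate roots α, ᾱ with |α| ≤ 4+2√2 and |α-1| ≤ 3+2√2, and all its n-2 real roots lie in [-1/2, 1]. Then n ≤ 9. -/
open Polynomial Complex

private lemma aux_scalar (r : ℝ) (h1 : -(1/2) ≤ r) (h2 : r ≤ 1) :
    |r|^4 * |1 - r| ≤ 3/32 := by
  have ha : |r|^4 = r^4 := by rw [← _root_.abs_pow, _root_.abs_of_nonneg (by positivity)]
  have hb : |1 - r| = 1 - r := _root_.abs_of_nonneg (by linarith)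
  rw [ha, hb]
  nlinarith [mul_nonneg (show (0:ℝ) ≤ r + 1/2 by linarith) (sq_nonneg (r^2 - 3/4*r)),
    mul_nonneg (show (0:ℝ) ≤ r + 1/2 by linarith) (sq_nonneg (r - 1))]

private lemma aux_prod_pow (s : Multiset ℂ) (f g : ℂ → ℝ) :
    ((s.map f).prod)^4 * (s.map g).prod = (s.map (fun r => f r ^ 4 * g r)).prod := by
  induction s using Multiset.induction with
  | empty => simp
  | cons a s ih =>
    simp only [Multiset.map_cons, Multiset.prod_cons]
    rw [← ih]; ring

private lemma aux_prod_le (t : Multiset ℂ) (g : ℂ → ℝ)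
    (h : ∀ x ∈ t, 0 ≤ g x ∧ g x ≤ 3/32) :
    (t.map g).prod ≤ (3/32 : ℝ) ^ (Multiset.card t) := by
  induction t using Multiset.induction with
  | empty => simp
  | cons a t ih =>
    have ha := h a (Multiset.mem_cons_self a t)
    have ht : ∀ x ∈ t, 0 ≤ g x ∧ g x ≤ 3/32 := fun x hx => h x (Multiset.mem_cons_of_mem hx)
    have hnn : (0:ℝ) ≤ (t.map g).prod := by
      apply Multiset.prod_nonneg
      intro b hb
      obtain ⟨x, hx, rfl⟩ := Multiset.mem_map.mp hb
      exact (ht x hx).1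
    simp only [Multiset.map_cons, Multiset.prod_cons, Multiset.card_cons, pow_succ]
    calc g a * (t.map g).prod ≤ (3/32) * ((3/32:ℝ) ^ Multiset.card t) :=
          mul_le_mul ha.2 (ih ht) hnn (by norm_num)
      _ = (3/32:ℝ) ^ Multiset.card t * (3/32) := by ring

private lemma aux_no_root (p : Polynomial ℚ) (hp : Irreducible p) (hdeg : 2 ≤ p.natDegree)
    (x : ℚ) : p.eval x ≠ 0 := by
  intro h
  obtain ⟨r, hr⟩ := Polynomial.dvd_iff_isRoot.mpr h
  rcases hp.isUnit_or_isUnit hr with h1 | h2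
  · exact Polynomial.not_isUnit_X_sub_C x h1
  · have hr0 : r ≠ 0 := by rintro rfl; simp at hr; exact hp.ne_zero (by simpa using hr)
    have : p.natDegree = 1 := by
      rw [hr, Polynomial.natDegree_mul (Polynomial.X_sub_C_ne_zero x) hr0,
        Polynomial.natDegree_X_sub_C, Polynomial.natDegree_eq_zero_of_isUnit h2]
    omega

private lemma aux_eval_map {R : Type*} [CommRing R] (q : Polynomial ℤ) (f : ℤ →+* R) (k : ℤ) :
    (q.map f).eval (f k) = f (q.eval k) := by
  rw [Polynomial.eval_map, Polynomial.eval₂_at_apply]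

theorem stmt_5 (q : Polynomial ℤ) (n : ℕ) (hn : 2 ≤ n)
    (hdeg : q.natDegree = n) (hmonic : q.Monic)
    (hirr : Irreducible (q.map (Int.castRingHom ℚ)))
    (α : ℂ) (hαroot : Polynomial.aeval α q = 0) (hα : α.im ≠ 0)
    (hbound1 : ‖α‖ ≤ 4 + 2 * Real.sqrt 2)
    (hbound2 : ‖α - 1‖ ≤ 3 + 2 * Real.sqrt 2)
    (hroots : ∀ z : ℂ, Polynomial.aeval z q = 0 →
      z = α ∨ z = (starRingEnd ℂ) α ∨ (z.im = 0 ∧ z.re ∈ Set.Icc (-(1/2) : ℝ) 1)) :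
    n ≤ 9 := by
  by_contra hcon
  have hn10 : 10 ≤ n := by omega
  set Q : Polynomial ℂ := q.map (Int.castRingHom ℂ) with hQdef
  have hQm : Q.Monic := hmonic.map _
  have hQ0 : Q ≠ 0 := hQm.ne_zero
  have hQdeg : Q.natDegree = n := by rw [hQdef, hmonic.natDegree_map, hdeg]
  have hsplit : Q.Splits := IsAlgClosed.splits Q
  set s : Multiset ℂ := Q.roots with hsdef
  have hcard : Multiset.card s = n := by
    rw [hsdef, Polynomial.splits_iff_card_roots.mp hsplit, hQdeg]
  -- separable, so roots are distinct
  have hsep : (q.map (Int.castRingHom ℚ)).Separable := hirr.separable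
  have hQeq : Q = (q.map (Int.castRingHom ℚ)).map (algebraMap ℚ ℂ) := by
    have hcomp : (algebraMap ℚ ℂ).comp (Int.castRingHom ℚ) = Int.castRingHom ℂ :=
      RingHom.ext_int _ _
    rw [hQdef, Polynomial.map_map, hcomp]
  have hnodup : s.Nodup := by
    rw [hsdef, hQeq]
    exact Polynomial.nodup_roots (hsep.map)
  -- roots correspondence
  have heval : ∀ z : ℂ, Polynomial.aeval z q = 0 ↔ Q.eval z = 0 := by
    intro z
    rw [hQdef, Polynomial.eval_map, Polynomial.aeval_def, algebraMap_int_eq]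
  have hαs : α ∈ s := Polynomial.mem_roots'.mpr ⟨hQ0, (heval α).mp hαroot⟩
  have hconjroot : Polynomial.aeval ((starRingEnd ℂ) α) q = 0 := by
    rw [Polynomial.aeval_def, algebraMap_int_eq] at hαroot ⊢
    have h1 := Polynomial.hom_eval₂ q (Int.castRingHom ℂ) (starRingEnd ℂ) α
    rw [show (starRingEnd ℂ).comp (Int.castRingHom ℂ) = Int.castRingHom ℂ from
      RingHom.ext_int _ _] at h1
    rw [← h1, hαroot, map_zero]
  have hcs : (starRingEnd ℂ) α ∈ s := Polynomial.mem_roots'.mpr ⟨hQ0, (heval _).mp hconjroot⟩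
  have hne : (starRingEnd ℂ) α ≠ α := fun h => hα (Complex.conj_eq_iff_im.mp h)
  have hcs' : (starRingEnd ℂ) α ∈ s.erase α := (Multiset.mem_erase_of_ne hne).mpr hcs
  set t : Multiset ℂ := (s.erase α).erase ((starRingEnd ℂ) α) with htdef
  have hsplit2 : s = α ::ₘ (starRingEnd ℂ) α ::ₘ t := by
    rw [htdef, Multiset.cons_erase hcs', Multiset.cons_erase hαs]
  have htcard : Multiset.card t = n - 2 := by
    have h1 := hcard
    rw [hsplit2] at h1
    simp only [Multiset.card_cons] at h1
    omega
  have htmem : ∀ x ∈ t, x.im = 0 ∧ x.re ∈ Set.Icc (-(1/2):ℝ) 1 := by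
    intro x hx
    have hxe : x ∈ s.erase α := Multiset.mem_of_mem_erase hx
    have hxs : x ∈ s := Multiset.mem_of_mem_erase hxe
    have hx1 : x ≠ α := (hnodup.mem_erase_iff.mp hxe).1
    have hx2 : x ≠ (starRingEnd ℂ) α := ((hnodup.erase α).mem_erase_iff.mp hx).1
    rcases hroots x ((heval x).mpr (Polynomial.mem_roots'.mp hxs).2) with h | h | h
    · exact absurd h hx1
    · exact absurd h hx2
    · exact h
  -- factorization and evaluation products
  have hfact : Q = (s.map (fun a => X - C a)).prod :=
    hsplit.eq_prod_roots_of_monic hQm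
  have hP0 : ‖Q.eval 0‖ = (s.map (fun r => ‖r‖)).prod := by
    rw [hfact, Polynomial.eval_multiset_prod, Multiset.map_map]
    show (normHom : ℂ →*₀ ℝ) _ = _
    rw [map_multiset_prod, Multiset.map_map]
    congr 1
    apply Multiset.map_congr rfl
    intro a _
    simp [normHom]
  have hP1 : ‖Q.eval 1‖ = (s.map (fun r => ‖1 - r‖)).prod := by
    rw [hfact, Polynomial.eval_multiset_prod, Multiset.map_map]
    show (normHom : ℂ →*₀ ℝ) _ = _
    rw [map_multiset_prod, Multiset.map_map]
    congr 1
    apply Multiset.map_congr rfl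
    intro a _
    simp [normHom]
  set g : ℂ → ℝ := fun r => ‖r‖^4 * ‖1 - r‖ with hgdef
  have hgnn : ∀ r : ℂ, 0 ≤ g r := fun r =>
    mul_nonneg (pow_nonneg (norm_nonneg r) 4) (norm_nonneg _)
  have key : (‖Q.eval 0‖)^4 * ‖Q.eval 1‖ = (s.map g).prod := by
    rw [hP0, hP1, aux_prod_pow]
  -- lower bound
  have hmapdeg : 2 ≤ (q.map (Int.castRingHom ℚ)).natDegree := by
    rw [hmonic.natDegree_map, hdeg]; exact hn
  have hev0 : Q.eval 0 = ((q.eval 0 : ℤ) : ℂ) := by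
    have h := aux_eval_map q (Int.castRingHom ℂ) 0
    rw [map_zero] at h
    rw [hQdef, h]
    simp
  have hev1 : Q.eval 1 = ((q.eval 1 : ℤ) : ℂ) := by
    have h := aux_eval_map q (Int.castRingHom ℂ) 1
    rw [map_one] at h
    rw [hQdef, h]
    simp
  have hq0ne : q.eval 0 ≠ 0 := by
    intro h
    have h2 : (q.map (Int.castRingHom ℚ)).eval ((0:ℤ):ℚ) = 0 := by
      rw [show ((0:ℤ):ℚ) = (Int.castRingHom ℚ) 0 by simp, aux_eval_map, h, map_zero]
    exact aux_no_root _ hirr hmapdeg _ h2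
  have hq1ne : q.eval 1 ≠ 0 := by
    intro h
    have h2 : (q.map (Int.castRingHom ℚ)).eval ((1:ℤ):ℚ) = 0 := by
      rw [show ((1:ℤ):ℚ) = (Int.castRingHom ℚ) 1 by simp, aux_eval_map, h, map_zero]
    exact aux_no_root _ hirr hmapdeg _ h2
  have habs0 : 1 ≤ ‖Q.eval 0‖ := by
    rw [hev0, Complex.norm_intCast]
    exact_mod_cast Int.one_le_abs hq0ne
  have habs1 : 1 ≤ ‖Q.eval 1‖ := by
    rw [hev1, Complex.norm_intCast]
    exact_mod_cast Int.one_le_abs hq1ne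
  have lower : (1:ℝ) ≤ (s.map g).prod := by
    rw [← key]
    have h4 : (1:ℝ) ≤ ‖Q.eval 0‖^4 := one_le_pow₀ habs0
    exact le_trans h4 (le_mul_of_one_le_right (by linarith) habs1)
  -- upper bound
  set c : ℝ := Real.sqrt 2 with hcdef
  have hc2 : c^2 = 2 := Real.sq_sqrt (by norm_num)
  have hc0 : (0:ℝ) ≤ c := Real.sqrt_nonneg 2
  set K : ℝ := (4+2*c)^4*(3+2*c) with hKdef
  have hK0 : 0 ≤ K := by positivity
  have hgα : g α ≤ K := by
    have h1 : ‖1 - α‖ = ‖α - 1‖ := by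
      rw [← norm_neg]; ring_nf
    rw [hgdef]
    simp only
    rw [h1]
    exact mul_le_mul (pow_le_pow_left₀ (norm_nonneg α) hbound1 4) hbound2
      (norm_nonneg _) (by positivity)
  have hgconj : g ((starRingEnd ℂ) α) ≤ K := by
    have h1 : (1:ℂ) - (starRingEnd ℂ) α = (starRingEnd ℂ) (1 - α) := by
      rw [map_sub, map_one]
    have h2 : ‖1 - (starRingEnd ℂ) α‖ = ‖α - 1‖ := by
      rw [h1, Complex.norm_conj, ← norm_neg]; ring_nf
    rw [hgdef]
    simp only
    rw [h2, Complex.norm_conj]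
    exact mul_le_mul (pow_le_pow_left₀ (norm_nonneg α) hbound1 4) hbound2
      (norm_nonneg _) (by positivity)
  have htle : (t.map g).prod ≤ (3/32:ℝ)^(n-2) := by
    rw [← htcard]
    apply aux_prod_le
    intro x hx
    obtain ⟨him, hre⟩ := htmem x hx
    refine ⟨hgnn x, ?_⟩
    have hxeq : x = ((x.re : ℝ) : ℂ) := Complex.ext rfl (by simp [him])
    have e1 : ‖x‖ = |x.re| := by rw [hxeq]; exact Complex.norm_real _
    have e2 : ‖1 - x‖ = |1 - x.re| := by
      rw [show (1:ℂ) - x = (((1 - x.re : ℝ)):ℂ) by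
        apply Complex.ext <;> simp [Complex.sub_re, Complex.sub_im, him], Complex.norm_real, Real.norm_eq_abs]
    rw [hgdef]
    simp only
    rw [e1, e2]
    exact aux_scalar x.re hre.1 hre.2
  have htnn : (0:ℝ) ≤ (t.map g).prod := by
    apply Multiset.prod_nonneg
    intro b hb
    obtain ⟨x, _, rfl⟩ := Multiset.mem_map.mp hb
    exact hgnn x
  have hsum : (s.map g).prod = g α * g ((starRingEnd ℂ) α) * (t.map g).prod := by
    rw [hsplit2]
    simp only [Multiset.map_cons, Multiset.prod_cons]
    ring
  have upper : (s.map g).prod ≤ K^2 * (3/32:ℝ)^(n-2) := by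
    rw [hsum]
    calc g α * g ((starRingEnd ℂ) α) * (t.map g).prod
        ≤ (K * K) * ((3/32:ℝ)^(n-2)) := by
          apply mul_le_mul (mul_le_mul hgα hgconj (hgnn _) hK0) htle htnn (by positivity)
      _ = K^2 * (3/32:ℝ)^(n-2) := by ring
  have hpow : (3/32:ℝ)^(n-2) ≤ (3/32:ℝ)^8 :=
    pow_le_pow_of_le_one (by norm_num) (by norm_num) (by omega)
  have hfinal : (1:ℝ) ≤ K^2 * (3/32:ℝ)^8 :=
    le_trans lower (le_trans upper (mul_le_mul_of_nonneg_left hpow (by positivity)))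
  -- numeric contradiction
  have hclt : c < 1.41422 := by nlinarith
  have hKval : K = 6336 + 4480*c := by
    rw [hKdef]
    linear_combination (32*c^3+304*c^2+1216*c+2784)*hc2
  rw [hKval] at hfinal
  nlinarith [hfinal, hc2, hc0, hclt]
end

section
/- Let P(z) = zⁿ + ... + a₀ be a monic irreducible integer polynomial with exactly one pair of complex conjugate roots γ, γ̄, with |γ| ≤ 7+4√2, |γ+2| ≤ 8+4√2, |1+γ| ≤ 7+4√2, and all n-2 real roots in [-2,0]. Then n ≤ 16. -/
open Polynomial Complex

lemma aux_prod_le_pow (c : ℝ) (hc : 0 ≤ c) (s : Multiset ℝ)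
    (h : ∀ x ∈ s, 0 ≤ x ∧ x ≤ c) : s.prod ≤ c ^ Multiset.card s := by
  induction s using Multiset.induction_on with
  | empty => simp
  | cons a t ih =>
    simp only [Multiset.prod_cons, Multiset.card_cons, pow_succ]
    have ha := h a (Multiset.mem_cons_self a t)
    have ht : t.prod ≤ c ^ Multiset.card t :=
      ih (fun x hx => h x (Multiset.mem_cons_of_mem hx))
    have htnn : 0 ≤ t.prod := Multiset.prod_nonneg (fun x hx => (h x (Multiset.mem_cons_of_mem hx)).1)
    calc a * t.prod ≤ c * (c ^ Multiset.card t) := by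
          apply mul_le_mul ha.2 ht htnn hc
      _ = c ^ Multiset.card t * c := by ring

theorem stmt_8 (P : Polynomial ℤ) (n : ℕ) (hn : 2 ≤ n)
    (hdeg : P.natDegree = n) (hmonic : P.Monic)
    (hirr : Irreducible (P.map (Int.castRingHom ℚ)))
    (γ : ℂ) (hγroot : Polynomial.aeval γ P = 0) (hγ : γ.im ≠ 0)
    (hbound1 : ‖γ‖ ≤ 7 + 4 * Real.sqrt 2)
    (hbound2 : ‖γ + 2‖ ≤ 8 + 4 * Real.sqrt 2)
    (hbound3 : ‖1 + γ‖ ≤ 7 + 4 * Real.sqrt 2)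
    (hroots : ∀ z : ℂ, Polynomial.aeval z P = 0 →
      z = γ ∨ z = (starRingEnd ℂ) γ ∨ (z.im = 0 ∧ z.re ∈ Set.Icc (-2 : ℝ) 0)) :
    n ≤ 16 := by
  set Pc : Polynomial ℂ := P.map (Int.castRingHom ℂ) with hPc
  have hPc_monic : Pc.Monic := hmonic.map _
  have hPc_ne : Pc ≠ 0 := hPc_monic.ne_zero
  have hdegC : Pc.natDegree = n := by
    rw [hPc, hmonic.natDegree_map]; exact hdeg
  have hsplits : Splits Pc := IsAlgClosed.splits _
  have hcard : Multiset.card Pc.roots = n := by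
    rw [splits_iff_card_roots.mp hsplits, hdegC]
  -- aeval vs eval on Pc
  have hev : ∀ z : ℂ, Polynomial.eval z Pc = Polynomial.aeval z P := by
    intro z
    rw [hPc, Polynomial.eval_map, Polynomial.aeval_def]
    rfl
  -- γ and conj γ are roots
  have hγR : γ ∈ Pc.roots := by
    rw [Polynomial.mem_roots hPc_ne]
    exact (hev γ).trans hγroot
  have hconj_root : Polynomial.aeval ((starRingEnd ℂ) γ) P = 0 := by
    have h1 : (starRingEnd ℂ) (Polynomial.aeval γ P) = 0 := by rw [hγroot]; simp
    rw [Polynomial.aeval_def, Polynomial.hom_eval₂] at h1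
    rw [Polynomial.aeval_def]
    convert h1 using 2
    apply RingHom.ext_int
  have hγ'R : (starRingEnd ℂ) γ ∈ Pc.roots := by
    rw [Polynomial.mem_roots hPc_ne]
    exact (hev _).trans hconj_root
  have hne : γ ≠ (starRingEnd ℂ) γ := by
    intro h
    exact hγ (Complex.conj_eq_iff_im.mp h.symm)
  -- nodup roots
  have hsepQ : (P.map (Int.castRingHom ℚ)).Separable := hirr.separable
  have hsepC : Pc.Separable := by
    have h2 := hsepQ.map (f := algebraMap ℚ ℂ)
    rwa [Polynomial.map_map, show (algebraMap ℚ ℂ).comp (Int.castRingHom ℚ) = Int.castRingHom ℂ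
      from RingHom.ext_int _ _] at h2
  have hnd : Pc.roots.Nodup := Polynomial.nodup_roots hsepC
  -- decompose roots multiset
  set R1 := Pc.roots.erase γ with hR1
  have hdec1 : Pc.roots = γ ::ₘ R1 := (Multiset.cons_erase hγR).symm
  have hγ'R1 : (starRingEnd ℂ) γ ∈ R1 :=
    (Multiset.mem_erase_of_ne (Ne.symm hne)).mpr hγ'R
  set R2 := R1.erase ((starRingEnd ℂ) γ) with hR2
  have hdec2 : R1 = (starRingEnd ℂ) γ ::ₘ R2 := (Multiset.cons_erase hγ'R1).symm
  have hγnotR1 : γ ∉ R1 := by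
    intro h
    have := hnd
    rw [hdec1] at this
    exact (Multiset.nodup_cons.mp this).1 h
  have hndR1 : R1.Nodup := hnd.erase γ
  have hγ'notR2 : (starRingEnd ℂ) γ ∉ R2 := by
    intro h
    rw [hdec2] at hndR1
    exact (Multiset.nodup_cons.mp hndR1).1 h
  have hcard2 : Multiset.card R2 = n - 2 := by
    have : Multiset.card Pc.roots = Multiset.card R2 + 2 := by
      rw [hdec1, hdec2]; simp
    omega
  -- every element of R2 is real in [-2,0]
  have hR2real : ∀ z ∈ R2, z.im = 0 ∧ z.re ∈ Set.Icc (-2 : ℝ) 0 := by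
    intro z hz
    have hzR : z ∈ Pc.roots := by
      rw [hdec1, hdec2]
      exact Multiset.mem_cons_of_mem (Multiset.mem_cons_of_mem hz)
    have hzroot : Polynomial.aeval z P = 0 := by
      rw [← hev]
      exact (Polynomial.mem_roots hPc_ne).mp hzR
    rcases hroots z hzroot with h | h | h
    · exfalso; apply hγnotR1; rw [hdec2, ← h]; exact Multiset.mem_cons_of_mem hz
    · exfalso; apply hγ'notR2; rw [← h]; exact hz
    · exact h
  -- the product formula
  have hprodform : Pc = (Pc.roots.map fun r => X - C r).prod :=
    hsplits.eq_prod_roots_of_monic hPc_monic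
  have habs_eval : ∀ a : ℂ, ‖Polynomial.eval a Pc‖
      = (Pc.roots.map fun r => ‖a - r‖).prod := by
    intro a
    conv_lhs => rw [hprodform]
    have hnp : ∀ s : Multiset ℂ, ‖s.prod‖ = (s.map (fun x => ‖x‖)).prod :=
      fun s => map_multiset_prod (normHom : ℂ →*₀ ℝ) s
    rw [Polynomial.eval_multiset_prod, Multiset.map_map, hnp,
      Multiset.map_map]
    congr 1
    apply Multiset.map_congr rfl
    intro r _
    simp
  -- integer evaluations are nonzero
  have hint : ∀ k : ℤ, P.eval k ≠ 0 := by
    intro k hk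
    have hroot : Polynomial.IsRoot (P.map (Int.castRingHom ℚ)) (k : ℚ) := by
      simp [Polynomial.IsRoot, Polynomial.eval_intCast_map, hk]
    have hdvd : (X - C (k : ℚ)) ∣ P.map (Int.castRingHom ℚ) :=
      Polynomial.dvd_iff_isRoot.mpr hroot
    obtain ⟨q, hq⟩ := hdvd
    rcases hirr.isUnit_or_isUnit hq with h | h
    · exact Polynomial.not_isUnit_X_sub_C _ h
    · have hq0 : q ≠ 0 := by
        intro h0
        rw [h0, mul_zero] at hq
        exact (hmonic.map (Int.castRingHom ℚ)).ne_zero hq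
      have hd : (P.map (Int.castRingHom ℚ)).natDegree = 1 := by
        rw [hq, Polynomial.natDegree_mul (Polynomial.X_sub_C_ne_zero _) hq0,
          Polynomial.natDegree_X_sub_C, Polynomial.natDegree_eq_zero_of_isUnit h]
      rw [(hmonic.natDegree_map _), hdeg] at hd
      omega
  have hint1 : ∀ k : ℤ, (1 : ℝ) ≤ ‖Polynomial.eval ((k : ℂ)) Pc‖ := by
    intro k
    simp only [hPc, Polynomial.eval_intCast_map, Int.cast_id, eq_intCast, Complex.norm_intCast]
    exact_mod_cast Int.one_le_abs (hint k)
  -- define g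
  set g : ℂ → ℝ := fun r => ‖0 - r‖ * ‖-1 - r‖ ^ 2 * ‖-2 - r‖
    with hg
  have hgprod : (1 : ℝ) ≤ (Pc.roots.map g).prod := by
    have e0 := habs_eval 0
    have e1 := habs_eval (-1)
    have e2 := habs_eval (-2)
    have h0 : (1:ℝ) ≤ (Pc.roots.map fun r => ‖0 - r‖).prod := by
      rw [← e0]; simpa using hint1 0
    have h1 : (1:ℝ) ≤ (Pc.roots.map fun r => ‖-1 - r‖).prod := by
      rw [← e1]; simpa using hint1 (-1)
    have h2 : (1:ℝ) ≤ (Pc.roots.map fun r => ‖-2 - r‖).prod := by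
      rw [← e2]; simpa using hint1 (-2)
    have key : (Pc.roots.map g).prod
        = (Pc.roots.map fun r => ‖0 - r‖).prod
          * ((Pc.roots.map fun r => ‖-1 - r‖).prod) ^ 2
          * (Pc.roots.map fun r => ‖-2 - r‖).prod := by
      rw [hg]
      rw [show (fun r : ℂ => ‖0 - r‖ * ‖-1 - r‖ ^ 2 * ‖-2 - r‖)
        = fun r => (‖0 - r‖ * (‖-1 - r‖ * ‖-1 - r‖))
            * ‖-2 - r‖ by funext r; ring]
      rw [Multiset.prod_map_mul, Multiset.prod_map_mul, Multiset.prod_map_mul]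
      ring
    rw [key]
    set A := (Pc.roots.map fun r => ‖0 - r‖).prod
    set B := (Pc.roots.map fun r => ‖-1 - r‖).prod
    set C' := (Pc.roots.map fun r => ‖-2 - r‖).prod
    have q1 : (1:ℝ) ≤ B^2 := by nlinarith
    have q2 : (1:ℝ) ≤ A * B^2 := by nlinarith
    nlinarith
  -- nonnegativity of g
  have hgnn : ∀ z : ℂ, 0 ≤ g z := by
    intro z
    rw [hg]
    positivity
  -- conj symmetry
  have hgconj : g ((starRingEnd ℂ) γ) = g γ := by
    rw [hg]
    simp only
    have c0 : ‖0 - (starRingEnd ℂ) γ‖ = ‖0 - γ‖ := by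
      rw [show (0 : ℂ) - (starRingEnd ℂ) γ = (starRingEnd ℂ) (0 - γ) by
        simp [map_sub, map_neg, map_ofNat], Complex.norm_conj]
    have c1 : ‖-1 - (starRingEnd ℂ) γ‖ = ‖-1 - γ‖ := by
      rw [show (-1 : ℂ) - (starRingEnd ℂ) γ = (starRingEnd ℂ) (-1 - γ) by
        simp [map_sub, map_neg, map_ofNat], Complex.norm_conj]
    have c2 : ‖-2 - (starRingEnd ℂ) γ‖ = ‖-2 - γ‖ := by
      rw [show (-2 : ℂ) - (starRingEnd ℂ) γ = (starRingEnd ℂ) (-2 - γ) by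
        simp [map_sub, map_neg, map_ofNat], Complex.norm_conj]
    rw [c0, c1, c2]
  -- bound on real roots
  have hR2bound : ∀ z ∈ R2, 0 ≤ g z ∧ g z ≤ 1/4 := by
    intro z hz
    refine ⟨hgnn z, ?_⟩
    obtain ⟨him, hre⟩ := hR2real z hz
    obtain ⟨hre1, hre2⟩ := hre
    have hzeq : z = ((z.re : ℝ) : ℂ) := by
      apply Complex.ext <;> simp [him]
    rw [hg]
    simp only
    set x := z.re with hx
    have e0 : ‖0 - z‖ = |x| := by
      rw [hzeq, show (0 : ℂ) - ((x : ℝ) : ℂ) = (((-x : ℝ)) : ℂ) by push_cast; ring,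
        Complex.norm_real, Real.norm_eq_abs, abs_neg]
    have e1 : ‖-1 - z‖ = |(-1 - x : ℝ)| := by
      rw [hzeq, show (-1 : ℂ) - ((x : ℝ) : ℂ) = (((-1 - x : ℝ)) : ℂ) by push_cast; ring,
        Complex.norm_real, Real.norm_eq_abs]
    have e2 : ‖-2 - z‖ = |(-2 - x : ℝ)| := by
      rw [hzeq, show (-2 : ℂ) - ((x : ℝ) : ℂ) = (((-2 - x : ℝ)) : ℂ) by push_cast; ring,
        Complex.norm_real, Real.norm_eq_abs]
    rw [e0, e1, e2]
    have a0 : |x| = -x := abs_of_nonpos hre2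
    have a2 : |(-2 - x : ℝ)| = 2 + x := by
      rw [abs_of_nonpos (by linarith)]; ring
    rw [a0, a2, _root_.sq_abs]
    nlinarith [sq_nonneg ((1 + x)^2 - 1/2), sq_nonneg (1 + x)]
  -- product over R2
  have hR2prod : ((R2.map g).prod : ℝ) ≤ (1/4) ^ (n - 2) := by
    have := aux_prod_le_pow (1/4) (by norm_num) (R2.map g) ?_
    · rwa [Multiset.card_map, hcard2] at this
    · intro x hx
      obtain ⟨z, hz, rfl⟩ := Multiset.mem_map.mp hx
      exact hR2bound z hz
  -- bound on g γ
  have hs0 : (0:ℝ) ≤ Real.sqrt 2 := Real.sqrt_nonneg 2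
  have hs2 : Real.sqrt 2 ^ 2 = 2 := Real.sq_sqrt (by norm_num)
  have hs32 : Real.sqrt 2 ≤ 3/2 := by nlinarith
  have hA0 : ‖0 - γ‖ ≤ 13 := by
    rw [zero_sub, norm_neg]
    linarith
  have hA1 : ‖-1 - γ‖ ≤ 13 := by
    rw [show (-1 : ℂ) - γ = -(1 + γ) by ring, norm_neg]
    linarith
  have hA2 : ‖-2 - γ‖ ≤ 14 := by
    rw [show (-2 : ℂ) - γ = -(γ + 2) by ring, norm_neg]
    linarith
  have hgγ : g γ ≤ 30758 := by
    rw [hg]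
    simp only
    have n0 : (0:ℝ) ≤ ‖0 - γ‖ := norm_nonneg _
    have n1 : (0:ℝ) ≤ ‖-1 - γ‖ := norm_nonneg _
    have n2 : (0:ℝ) ≤ ‖-2 - γ‖ := norm_nonneg _
    nlinarith [sq_nonneg (‖-1 - γ‖), mul_nonneg n0 (mul_nonneg n1 n1)]
  -- final contradiction
  by_contra hcon
  push_neg at hcon
  have h17 : 17 ≤ n := hcon
  have hppow : ((1:ℝ)/4) ^ (n - 2) ≤ (1/4) ^ 15 :=
    pow_le_pow_of_le_one (by norm_num) (by norm_num) (by omega)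
  have hsplit : (Pc.roots.map g).prod = g γ * (g ((starRingEnd ℂ) γ) * (R2.map g).prod) := by
    rw [hdec1, hdec2, Multiset.map_cons, Multiset.map_cons, Multiset.prod_cons,
      Multiset.prod_cons]
  rw [hsplit, hgconj] at hgprod
  have hR2nn : (0:ℝ) ≤ (R2.map g).prod :=
    Multiset.prod_nonneg (by
      intro x hx
      obtain ⟨z, hz, rfl⟩ := Multiset.mem_map.mp hx
      exact hgnn z)
  have hgγnn : (0:ℝ) ≤ g γ := hgnn γ
  have hchain : (1:ℝ) ≤ 30758 * (30758 * (1/4) ^ 15) := by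
    calc (1:ℝ) ≤ g γ * (g γ * (R2.map g).prod) := hgprod
      _ ≤ 30758 * (30758 * (1/4) ^ 15) := by
          apply mul_le_mul hgγ _ (mul_nonneg hgγnn hR2nn) (by norm_num)
          apply mul_le_mul hgγ _ hR2nn (by norm_num)
          calc (R2.map g).prod ≤ (1/4) ^ (n-2) := hR2prod
            _ ≤ (1/4) ^ 15 := hppow
  norm_num at hchain
end

section
/- Let λ be an algebraic integer with minimal polynomial λ⁴ + a₃λ³ + a₂λ² + a₁λ + a₀ = 0 over ℤ, and suppose α = (λ² - 1)/2 is also an algebraic integer of degree 4 over ℚ (i.e. λ² = 2α + 1 with ℚ(λ) = ℚ(α)). Then a₃, a₂, a₁ are even and a₀ is odd. -/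
open Polynomial

private theorem coeffdvd (α : ℂ) (hint : IsIntegral ℤ α) (hdeg : (minpoly ℚ α).natDegree = 4)
    (P : ℤ[X]) (haP : aeval α P = 0) (hc4 : P.coeff 4 = 16) (hd : P.natDegree ≤ 4) :
    ∀ i, (16:ℤ) ∣ P.coeff i := by
  set q : ℤ[X] := minpoly ℤ α with hq
  have hqm : q.Monic := minpoly.monic hint
  have hmap : minpoly ℚ α = q.map (algebraMap ℤ ℚ) :=
    minpoly.isIntegrallyClosed_eq_field_fractions' ℚ hint
  have hqd : (q.map (algebraMap ℤ ℚ)).natDegree = 4 := by rw [← hmap]; exact hdeg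
  have hdvd : q.map (algebraMap ℤ ℚ) ∣ P.map (algebraMap ℤ ℚ) := by
    rw [← hmap]
    exact minpoly.dvd ℚ α (by rwa [aeval_map_algebraMap])
  obtain ⟨c, hc⟩ := hdvd
  have hq0 : q.map (algebraMap ℤ ℚ) ≠ 0 := (hqm.map _).ne_zero
  have hP0 : P.map (algebraMap ℤ ℚ) ≠ 0 := by
    intro h
    have := congrArg (fun f => Polynomial.coeff f 4) h
    simp [coeff_map, hc4] at this
  have hc0 : c ≠ 0 := by rintro rfl; simp at hc; exact hP0 hc
  have hdc : c.natDegree = 0 := by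
    have h1 : (P.map (algebraMap ℤ ℚ)).natDegree ≤ 4 := natDegree_map_le.trans hd
    have h2 := natDegree_mul hq0 hc0
    rw [← hc, hqd] at h2
    omega
  obtain ⟨r, rfl⟩ := natDegree_eq_zero.mp hdc
  have h4 : ((q.coeff 4 : ℚ)) = 1 := by
    have := (hqm.map (algebraMap ℤ ℚ)).leadingCoeff
    rwa [leadingCoeff, hqd, coeff_map, algebraMap_int_eq, eq_intCast] at this
  have hr : r = 16 := by
    have h := congrArg (fun f => Polynomial.coeff f 4) hc
    simp only [coeff_map, coeff_mul_C, algebraMap_int_eq, eq_intCast, hc4] at h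
    rw [h4, one_mul] at h
    exact_mod_cast h.symm
  subst hr
  intro i
  have h := congrArg (fun f => Polynomial.coeff f i) hc
  simp only [coeff_map, coeff_mul_C, algebraMap_int_eq, eq_intCast] at h
  have h' : P.coeff i = q.coeff i * 16 := by exact_mod_cast h
  exact ⟨q.coeff i, by omega⟩

theorem stmt_9 (lam : ℂ) (a₀ a₁ a₂ a₃ : ℤ)
    (hmin : minpoly ℤ lam =
      X ^ 4 + C a₃ * X ^ 3 + C a₂ * X ^ 2 + C a₁ * X + C a₀)
    (hint : IsIntegral ℤ ((lam ^ 2 - 1) / 2))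
    (hdeg : (minpoly ℚ ((lam ^ 2 - 1) / 2)).natDegree = 4) :
    Even a₃ ∧ Even a₂ ∧ Even a₁ ∧ Odd a₀ := by
  set α : ℂ := (lam ^ 2 - 1) / 2 with hα
  have h0 : lam ^ 4 + (a₃ : ℂ) * lam ^ 3 + (a₂ : ℂ) * lam ^ 2 + (a₁ : ℂ) * lam + (a₀ : ℂ) = 0 := by
    have := minpoly.aeval ℤ lam
    rw [hmin] at this
    simpa using this
  set P : ℤ[X] := C 16 * X ^ 4 + C (32 + 8 * (2 * a₂ - a₃ ^ 2)) * X ^ 3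
      + C (24 + 12 * (2 * a₂ - a₃ ^ 2) + 4 * (a₂ ^ 2 + 2 * a₀ - 2 * a₁ * a₃)) * X ^ 2
      + C (8 + 6 * (2 * a₂ - a₃ ^ 2) + 4 * (a₂ ^ 2 + 2 * a₀ - 2 * a₁ * a₃)
          + 2 * (2 * a₀ * a₂ - a₁ ^ 2)) * X
      + C (1 + (2 * a₂ - a₃ ^ 2) + (a₂ ^ 2 + 2 * a₀ - 2 * a₁ * a₃)
          + (2 * a₀ * a₂ - a₁ ^ 2) + a₀ ^ 2) with hP
  have haP : aeval α P = 0 := by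
    simp only [hP, map_add, map_mul, map_ofNat, map_intCast, aeval_C, aeval_X, map_pow,
      algebraMap_int_eq, eq_intCast]
    push_cast
    rw [hα]
    field_simp
    linear_combination (16 * (lam ^ 4 - (a₃:ℂ) * lam ^ 3 + (a₂:ℂ) * lam ^ 2
      - (a₁:ℂ) * lam + (a₀:ℂ))) * h0
  have hc4 : P.coeff 4 = 16 := by
    rw [hP]
    simp only [coeff_add, coeff_C_mul, coeff_X_pow, coeff_C, coeff_X]
    norm_num
  have hd : P.natDegree ≤ 4 := by rw [hP]; compute_degree
  have hdvd := coeffdvd α hint hdeg P haP hc4 hd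
  have d3 : (16:ℤ) ∣ 32 + 8 * (2 * a₂ - a₃ ^ 2) := by
    have := hdvd 3
    rwa [hP, show (C 16 * X ^ 4 + C (32 + 8 * (2 * a₂ - a₃ ^ 2)) * X ^ 3
      + C (24 + 12 * (2 * a₂ - a₃ ^ 2) + 4 * (a₂ ^ 2 + 2 * a₀ - 2 * a₁ * a₃)) * X ^ 2
      + C (8 + 6 * (2 * a₂ - a₃ ^ 2) + 4 * (a₂ ^ 2 + 2 * a₀ - 2 * a₁ * a₃)
          + 2 * (2 * a₀ * a₂ - a₁ ^ 2)) * X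
      + C (1 + (2 * a₂ - a₃ ^ 2) + (a₂ ^ 2 + 2 * a₀ - 2 * a₁ * a₃)
          + (2 * a₀ * a₂ - a₁ ^ 2) + a₀ ^ 2) : ℤ[X]).coeff 3
      = 32 + 8 * (2 * a₂ - a₃ ^ 2) from by
        simp only [coeff_add, coeff_C_mul, coeff_X_pow, coeff_C, coeff_X]; norm_num] at this
  have d2 : (16:ℤ) ∣ 24 + 12 * (2 * a₂ - a₃ ^ 2) + 4 * (a₂ ^ 2 + 2 * a₀ - 2 * a₁ * a₃) := by
    have := hdvd 2
    rwa [hP, show (C 16 * X ^ 4 + C (32 + 8 * (2 * a₂ - a₃ ^ 2)) * X ^ 3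
      + C (24 + 12 * (2 * a₂ - a₃ ^ 2) + 4 * (a₂ ^ 2 + 2 * a₀ - 2 * a₁ * a₃)) * X ^ 2
      + C (8 + 6 * (2 * a₂ - a₃ ^ 2) + 4 * (a₂ ^ 2 + 2 * a₀ - 2 * a₁ * a₃)
          + 2 * (2 * a₀ * a₂ - a₁ ^ 2)) * X
      + C (1 + (2 * a₂ - a₃ ^ 2) + (a₂ ^ 2 + 2 * a₀ - 2 * a₁ * a₃)
          + (2 * a₀ * a₂ - a₁ ^ 2) + a₀ ^ 2) : ℤ[X]).coeff 2
      = 24 + 12 * (2 * a₂ - a₃ ^ 2) + 4 * (a₂ ^ 2 + 2 * a₀ - 2 * a₁ * a₃) from by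
        simp only [coeff_add, coeff_C_mul, coeff_X_pow, coeff_C, coeff_X]; norm_num] at this
  have d1 : (16:ℤ) ∣ 8 + 6 * (2 * a₂ - a₃ ^ 2) + 4 * (a₂ ^ 2 + 2 * a₀ - 2 * a₁ * a₃)
      + 2 * (2 * a₀ * a₂ - a₁ ^ 2) := by
    have := hdvd 1
    rwa [hP, show (C 16 * X ^ 4 + C (32 + 8 * (2 * a₂ - a₃ ^ 2)) * X ^ 3
      + C (24 + 12 * (2 * a₂ - a₃ ^ 2) + 4 * (a₂ ^ 2 + 2 * a₀ - 2 * a₁ * a₃)) * X ^ 2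
      + C (8 + 6 * (2 * a₂ - a₃ ^ 2) + 4 * (a₂ ^ 2 + 2 * a₀ - 2 * a₁ * a₃)
          + 2 * (2 * a₀ * a₂ - a₁ ^ 2)) * X
      + C (1 + (2 * a₂ - a₃ ^ 2) + (a₂ ^ 2 + 2 * a₀ - 2 * a₁ * a₃)
          + (2 * a₀ * a₂ - a₁ ^ 2) + a₀ ^ 2) : ℤ[X]).coeff 1
      = 8 + 6 * (2 * a₂ - a₃ ^ 2) + 4 * (a₂ ^ 2 + 2 * a₀ - 2 * a₁ * a₃)
        + 2 * (2 * a₀ * a₂ - a₁ ^ 2) from by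
        simp only [coeff_add, coeff_C_mul, coeff_X_pow, coeff_C, coeff_X]; norm_num] at this
  clear hdvd haP hc4 hd hP h0 hmin hint hdeg hα
  have h3 : Even a₃ := by
    rw [← Int.even_pow' (n := 2) two_ne_zero, Int.even_iff]
    obtain ⟨k, hk⟩ := d3
    generalize a₃ ^ 2 = s at hk ⊢
    omega
  obtain ⟨b, hb⟩ := h3
  subst hb
  have hbb : (b + b) ^ 2 = 4 * b ^ 2 := by ring
  have hab : 2 * a₁ * (b + b) = 4 * (a₁ * b) := by ring
  rw [hbb, hab] at d2 d1
  have h2 : Even a₂ := by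
    rw [← Int.even_pow' (n := 2) two_ne_zero, Int.even_iff]
    obtain ⟨k, hk⟩ := d2
    generalize a₂ ^ 2 = s at hk ⊢
    generalize b ^ 2 = t at hk
    generalize a₁ * b = u at hk
    omega
  obtain ⟨c, hc⟩ := h2
  subst hc
  have hcc : (c + c) ^ 2 = 4 * c ^ 2 := by ring
  have hac : 2 * a₀ * (c + c) = 4 * (a₀ * c) := by ring
  rw [hcc] at d2 d1
  rw [hac] at d1
  have h0 : Odd a₀ := by
    rw [Int.odd_iff]
    obtain ⟨k, hk⟩ := d2
    generalize c ^ 2 = s at hk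
    generalize b ^ 2 = t at hk
    generalize a₁ * b = u at hk
    omega
  have h1 : Even a₁ := by
    rw [← Int.even_pow' (n := 2) two_ne_zero, Int.even_iff]
    obtain ⟨k, hk⟩ := d1
    generalize a₁ ^ 2 = s at hk ⊢
    generalize c ^ 2 = t at hk
    generalize b ^ 2 = u at hk
    generalize a₁ * b = v at hk
    generalize a₀ * c = w at hk
    omega
  exact ⟨⟨b, rfl⟩, ⟨c, rfl⟩, h1, h0⟩
end
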